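/- arXiv:2601.03653 — 4 statements merged into one kernel-verified Lean document; each statement's English description precedes it below -/
import Mathlib

section
/- Let k = F_{q^n} and let R = k{τ} be the twisted polynomial ring with commutation rule τa = a^q τ for a ∈ k. Let P ∈ R be monic irreducible of degree s. Then the set S = {f ∈ R : deg f ≤ s−1}, with addition from R and multiplication a ∘ b = (ab mod_r P) (the remainder upon right division by P), is a semifield of order q^{ns}. -/
/-- The twisted polynomial ring `R = k{τ}` over `k = F_{q^n}`, with commutation
rule `τ a = a^q τ`, axiomatized: `R` is a ring, free as a left `k`-module with
basis `1, τ, τ², …`. -/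
structure TwistedPolynomialRing (q : ℕ) (k : Type) [Field k] (R : Type) [Ring R] [Module k R] where
  ι : k →+* R
  τ : R
  tau_comm : ∀ a : k, τ * ι a = ι (a ^ q) * τ
  smul_def : ∀ (a : k) (r : R), a • r = ι a * r
  basis : Module.Basis ℕ k R
  basis_eq : ∀ i : ℕ, basis i = τ ^ i

variable {q : ℕ} {k R : Type} [Field k] [Ring R] [Module k R]

/-- The τ-degree of a twisted polynomial (`0` for the zero polynomial). -/
noncomputable def TwistedPolynomialRing.degτ (T : TwistedPolynomialRing q k R) (f : R) : ℕ :=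
  (T.basis.repr f).support.sup id

/-!
The τ-degree is additive on products, the leading coefficient of `x * y` being
`lc x * (lc y) ^ q ^ deg x`. Hence `R` has no zero divisors, a right division algorithm and only
principal left ideals, and `f ↦ f mod_r P` is additive and fixes `S` by uniqueness of remainders.

For the absence of zero divisors let `a, b ∈ S` be nonzero with `a * b = g * P`. As `P` is
irreducible and `deg b < deg P`, the generator of the left ideal `R b + R P` has degree `0`, so
`x * b + y * P = 1` for some `x, y`. Writing `f = f x b + f y P` and dividing `f x` on the right by
`a` (using `c a b = c g P`) shows that every `f` of degree `< deg b + deg P` is `e b + v P` with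
`deg e < deg a` and `deg v < deg b`. Comparing `k`-dimensions gives `deg P ≤ deg a`, which is
impossible.
-/

namespace TwistedPolynomialRing

variable (T : TwistedPolynomialRing q k R)

theorem le_degτ_of_repr_ne_zero {f : R} {i : ℕ} (h : T.basis.repr f i ≠ 0) : i ≤ T.degτ f :=
  Finset.le_sup (f := id) (Finsupp.mem_support_iff.mpr h)

theorem repr_eq_zero_of_degτ_lt {f : R} {i : ℕ} (h : T.degτ f < i) : T.basis.repr f i = 0 :=
  by_contra fun hi => (T.le_degτ_of_repr_ne_zero hi).not_gt h

noncomputable def leadCoeff (f : R) : k := T.basis.repr f (T.degτ f)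

@[simp]
theorem leadCoeff_zero : T.leadCoeff 0 = 0 := by
  rw [leadCoeff, map_zero, Finsupp.zero_apply]

theorem leadCoeff_ne_zero {f : R} (hf : f ≠ 0) : T.leadCoeff f ≠ 0 := by
  obtain ⟨i, hi, hsup⟩ := Finset.exists_mem_eq_sup _
    (Finsupp.support_nonempty_iff.mpr (T.basis.repr.map_ne_zero_iff.mpr hf)) id
  rw [leadCoeff, degτ, hsup]
  exact Finsupp.mem_support_iff.mp hi

theorem repr_smul_τ_pow (a : k) (i : ℕ) :
    T.basis.repr (a • T.τ ^ i) = Finsupp.single i a := by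
  rw [← T.basis_eq, map_smul, T.basis.repr_self, Finsupp.smul_single_one]

theorem degτ_smul_τ_pow {a : k} (ha : a ≠ 0) (i : ℕ) : T.degτ (a • T.τ ^ i) = i := by
  rw [degτ, repr_smul_τ_pow, Finsupp.support_single _ ha, Finset.sup_singleton, id]

theorem degτ_one : T.degτ 1 = 0 := by
  simpa using T.degτ_smul_τ_pow one_ne_zero 0

theorem leadCoeff_smul_τ_pow {a : k} (ha : a ≠ 0) (i : ℕ) :
    T.leadCoeff (a • T.τ ^ i) = a := by
  rw [leadCoeff, degτ_smul_τ_pow T ha, repr_smul_τ_pow, Finsupp.single_eq_same]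

theorem isScalarTower (T : TwistedPolynomialRing q k R) : IsScalarTower k R R :=
  ⟨fun a x y => by rw [smul_eq_mul, smul_eq_mul, T.smul_def, T.smul_def, mul_assoc]⟩

theorem τ_pow_mul_ι (i : ℕ) (a : k) : T.τ ^ i * T.ι a = T.ι (a ^ q ^ i) * T.τ ^ i := by
  induction i generalizing a with
  | zero => simp
  | succ i ih =>
    rw [pow_succ, mul_assoc, T.tau_comm, ← mul_assoc, ih, mul_assoc, ← pow_mul, ← pow_succ']

theorem smul_τ_pow_mul_smul_τ_pow (a b : k) (i j : ℕ) :
    (a • T.τ ^ i) * (b • T.τ ^ j) = (a * b ^ q ^ i) • T.τ ^ (i + j) := by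
  rw [T.smul_def, T.smul_def, T.smul_def, map_mul, pow_add, mul_assoc, ← mul_assoc (T.τ ^ i),
    τ_pow_mul_ι, mul_assoc, mul_assoc]

theorem repr_mul (x y : R) (m : ℕ) :
    T.basis.repr (x * y) m = ∑ i ∈ (T.basis.repr x).support, ∑ j ∈ (T.basis.repr y).support,
      if i + j = m then T.basis.repr x i * T.basis.repr y j ^ q ^ i else 0 := by
  conv_lhs => rw [← T.basis.linearCombination_repr x, ← T.basis.linearCombination_repr y,
    Finsupp.linearCombination_apply, Finsupp.linearCombination_apply, Finsupp.sum, Finsupp.sum,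
    Finset.sum_mul_sum]
  simp only [T.basis_eq, smul_τ_pow_mul_smul_τ_pow, map_sum, repr_smul_τ_pow,
    Finsupp.finsetSum_apply, Finsupp.single_apply]

theorem repr_mul_eq_zero_of_lt (x y : R) {m : ℕ} (h : T.degτ x + T.degτ y < m) :
    T.basis.repr (x * y) m = 0 := by
  rw [repr_mul]
  refine Finset.sum_eq_zero fun i hi => Finset.sum_eq_zero fun j hj => if_neg ?_
  have := T.le_degτ_of_repr_ne_zero (Finsupp.mem_support_iff.mp hi)
  have := T.le_degτ_of_repr_ne_zero (Finsupp.mem_support_iff.mp hj)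
  omega

theorem repr_mul_degτ_add {x y : R} (hx : x ≠ 0) (hy : y ≠ 0) :
    T.basis.repr (x * y) (T.degτ x + T.degτ y) =
      T.leadCoeff x * T.leadCoeff y ^ q ^ T.degτ x := by
  have hle {f : R} {i : ℕ} (hi : i ∈ (T.basis.repr f).support) : i ≤ T.degτ f :=
    T.le_degτ_of_repr_ne_zero (Finsupp.mem_support_iff.mp hi)
  have hmem {f : R} (hf : f ≠ 0) : T.degτ f ∈ (T.basis.repr f).support :=
    Finsupp.mem_support_iff.mpr (T.leadCoeff_ne_zero hf)
  rw [repr_mul, Finset.sum_eq_single_of_mem _ (hmem hx), Finset.sum_eq_single_of_mem _ (hmem hy),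
    if_pos rfl, leadCoeff, leadCoeff]
  · exact fun j hj hne => if_neg (by have := hle hj; omega)
  · refine fun i hi hne => Finset.sum_eq_zero fun j hj => if_neg ?_
    have := hle hi
    have := hle hj
    omega

theorem degτ_mul {x y : R} (hx : x ≠ 0) (hy : y ≠ 0) :
    T.degτ (x * y) = T.degτ x + T.degτ y := by
  refine le_antisymm (Finset.sup_le fun m hm => ?_) (T.le_degτ_of_repr_ne_zero ?_)
  · by_contra! hlt
    exact Finsupp.mem_support_iff.mp hm (T.repr_mul_eq_zero_of_lt x y hlt)
  · rw [repr_mul_degτ_add T hx hy]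
    exact mul_ne_zero (T.leadCoeff_ne_zero hx) (pow_ne_zero _ (T.leadCoeff_ne_zero hy))

theorem leadCoeff_mul {x y : R} (hx : x ≠ 0) (hy : y ≠ 0) :
    T.leadCoeff (x * y) = T.leadCoeff x * T.leadCoeff y ^ q ^ T.degτ x := by
  rw [leadCoeff, degτ_mul T hx hy, repr_mul_degτ_add T hx hy]

theorem noZeroDivisors (T : TwistedPolynomialRing q k R) : NoZeroDivisors R where
  eq_zero_or_eq_zero_of_mul_eq_zero {x y} hxy := by
    by_contra! h
    have := T.leadCoeff_mul h.1 h.2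
    rw [hxy, leadCoeff_zero] at this
    exact mul_ne_zero (T.leadCoeff_ne_zero h.1) (pow_ne_zero _ (T.leadCoeff_ne_zero h.2)) this.symm

noncomputable def degLT (N : ℕ) : Submodule k R := Submodule.span k (T.basis '' Set.Iio N)

theorem mem_degLT_iff_repr {f : R} {N : ℕ} :
    f ∈ T.degLT N ↔ ∀ m, N ≤ m → T.basis.repr f m = 0 := by
  rw [degLT, T.basis.mem_span_image]
  refine ⟨fun h m hm => ?_, fun h m hm => ?_⟩
  · by_contra hne
    exact (h (Finsupp.mem_support_iff.mpr hne) : m < N).not_ge hm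
  · by_contra! hm'
    exact Finsupp.mem_support_iff.mp hm (h m (not_lt.mp hm'))

theorem mem_degLT {f : R} {N : ℕ} : f ∈ T.degLT N ↔ f = 0 ∨ T.degτ f < N := by
  rw [degLT, T.basis.mem_span_image]
  rcases eq_or_ne f 0 with rfl | hf
  · simp
  refine ⟨fun h => Or.inr (h (Finsupp.mem_support_iff.mpr (T.leadCoeff_ne_zero hf))), ?_⟩
  rintro (h | h) m hm
  · exact absurd h hf
  · exact (T.le_degτ_of_repr_ne_zero (Finsupp.mem_support_iff.mp hm)).trans_lt h

theorem degLT_mono : Monotone T.degLT :=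
  fun _ _ h => Submodule.span_mono (Set.image_mono (Set.Iio_subset_Iio h))

theorem mul_mem_degLT_add {e : R} {M : ℕ} (b : R) (he : e ∈ T.degLT M) :
    e * b ∈ T.degLT (M + T.degτ b) := by
  rcases eq_or_ne b 0 with rfl | hb
  · simp
  rcases T.mem_degLT.mp he with rfl | he'
  · simp
  rcases eq_or_ne e 0 with rfl | he0
  · simp
  exact T.mem_degLT.mpr (Or.inr (by rw [T.degτ_mul he0 hb]; omega))

theorem mem_degLT_of_mul_mem {e b : R} {M : ℕ} (hb : b ≠ 0)
    (h : e * b ∈ T.degLT (M + T.degτ b)) : e ∈ T.degLT M := by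
  rcases eq_or_ne e 0 with rfl | he
  · exact zero_mem _
  have := T.noZeroDivisors
  have hlt := (T.mem_degLT.mp h).resolve_left (mul_ne_zero he hb)
  rw [T.degτ_mul he hb] at hlt
  exact T.mem_degLT.mpr (Or.inr (by omega))

theorem mul_eq_zero_of_mem_degLT {g P : R} (h : g * P ∈ T.degLT (T.degτ P)) : g * P = 0 := by
  rcases eq_or_ne P 0 with rfl | hP
  · exact mul_zero g
  obtain rfl : g = 0 :=
    (T.mem_degLT.mp (T.mem_degLT_of_mul_mem hP (by rwa [zero_add]))).resolve_right (by simp)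
  exact zero_mul P

theorem sub_mem_degLT_of_leadCoeff_eq {f g : R} (hdeg : T.degτ f = T.degτ g)
    (hlc : T.leadCoeff f = T.leadCoeff g) : f - g ∈ T.degLT (T.degτ f) := by
  refine T.mem_degLT_iff_repr.mpr fun m hm => ?_
  rw [map_sub, Finsupp.sub_apply, sub_eq_zero]
  rcases hm.eq_or_lt with rfl | hlt
  · rwa [leadCoeff, leadCoeff, ← hdeg] at hlc
  · rw [T.repr_eq_zero_of_degτ_lt hlt, T.repr_eq_zero_of_degτ_lt (hdeg ▸ hlt)]

theorem exists_sub_mul_mem_degLT {d f : R} (hd : d ≠ 0) (hf : f ≠ 0)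
    (h : T.degτ d ≤ T.degτ f) :
    ∃ c, f - c * d ∈ T.degLT (T.degτ f) := by
  set i := T.degτ f - T.degτ d
  set γ := T.leadCoeff f * (T.leadCoeff d ^ q ^ i)⁻¹
  have hd' : T.leadCoeff d ^ q ^ i ≠ 0 := pow_ne_zero _ (T.leadCoeff_ne_zero hd)
  have hγ : γ ≠ 0 := mul_ne_zero (T.leadCoeff_ne_zero hf) (inv_ne_zero hd')
  have hc : γ • T.τ ^ i ≠ 0 := fun h0 => hγ <| by
    rw [← T.leadCoeff_smul_τ_pow hγ i, h0, leadCoeff_zero]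
  refine ⟨γ • T.τ ^ i, T.sub_mem_degLT_of_leadCoeff_eq ?_ ?_⟩
  · rw [T.degτ_mul hc hd, T.degτ_smul_τ_pow hγ]
    omega
  · rw [T.leadCoeff_mul hc hd, T.degτ_smul_τ_pow hγ, T.leadCoeff_smul_τ_pow hγ,
      inv_mul_cancel_right₀ hd']

theorem exists_eq_mul_add {d : R} (hd : d ≠ 0) (f : R) :
    ∃ c e, f = c * d + e ∧ e ∈ T.degLT (T.degτ d) := by
  suffices ∀ N, ∀ f ∈ T.degLT N, ∃ c e, f = c * d + e ∧ e ∈ T.degLT (T.degτ d) from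
    this _ f (T.mem_degLT.mpr (Or.inr (Nat.lt_succ_self _)))
  intro N
  induction N with
  | zero => exact fun f hf => ⟨0, f, by simp, T.degLT_mono (Nat.zero_le _) hf⟩
  | succ N ih =>
    intro f hf
    by_cases hfd : f ∈ T.degLT (T.degτ d)
    · exact ⟨0, f, by simp, hfd⟩
    have hf0 : f ≠ 0 := fun h => hfd (h ▸ zero_mem _)
    have hlt := (T.mem_degLT.mp hf).resolve_left hf0
    obtain ⟨c, hc⟩ := T.exists_sub_mul_mem_degLT hd hf0
      (not_lt.mp fun h => hfd (T.mem_degLT.mpr (Or.inr h)))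
    obtain ⟨c', e, he, hed⟩ := ih _ (T.degLT_mono (Nat.le_of_lt_succ hlt) hc)
    exact ⟨c + c', e, by rw [add_mul, add_assoc, ← he, add_sub_cancel], hed⟩

theorem eq_of_mul_add_eq_mul_add {P g g' e e' : R} (he : e ∈ T.degLT (T.degτ P))
    (he' : e' ∈ T.degLT (T.degτ P)) (h : g * P + e = g' * P + e') : e = e' := by
  have hmul : (g' - g) * P = e - e' := by
    rw [sub_mul, sub_eq_sub_iff_add_eq_add, ← h, add_comm]
  rw [← sub_eq_zero, ← hmul]
  exact T.mul_eq_zero_of_mem_degLT (hmul ▸ sub_mem he he')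

theorem remainder_eq_of_eq_mul_add {P : R} {modr : R → R}
    (hmod : ∀ f : R, ∃ g : R, f = g * P + modr f)
    (hmods : ∀ f : R, modr f ∈ T.degLT (T.degτ P))
    {f g e : R} (h : f = g * P + e) (he : e ∈ T.degLT (T.degτ P)) : modr f = e := by
  obtain ⟨g', hg'⟩ := hmod f
  exact T.eq_of_mul_add_eq_mul_add (hmods f) he (hg'.symm.trans h)

theorem isPrincipalIdealRing (T : TwistedPolynomialRing q k R) : IsPrincipalIdealRing R where
  principal I := by
    classical
    by_cases hI : ∃ f ∈ I, f ≠ 0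
    swap
    · push Not at hI
      exact ⟨0, by simpa [Submodule.eq_bot_iff] using hI⟩
    have hex : ∃ n, ∃ d ∈ I, d ≠ 0 ∧ T.degτ d = n := by
      obtain ⟨f, hf, hf0⟩ := hI
      exact ⟨_, f, hf, hf0, rfl⟩
    obtain ⟨d, hdI, hd0, hdeg⟩ := Nat.find_spec hex
    refine ⟨d, le_antisymm (fun x hx => ?_) ((Ideal.span_singleton_le_iff_mem I).mpr hdI)⟩
    obtain ⟨c, e, rfl, he⟩ := T.exists_eq_mul_add hd0 x
    obtain rfl | he0 := eq_or_ne e 0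
    · exact Ideal.mem_span_singleton'.mpr ⟨c, (add_zero _).symm⟩
    have heI : e ∈ I := by simpa using I.sub_mem hx (I.mul_mem_left c hdI)
    have := Nat.find_min' hex ⟨e, heI, he0, rfl⟩
    have := (T.mem_degLT.mp he).resolve_left he0
    omega

theorem isUnit_of_degτ_eq_zero {d : R} (hd : d ≠ 0) (h : T.degτ d = 0) : IsUnit d := by
  have hd' : d = T.leadCoeff d • T.τ ^ 0 := by
    refine T.basis.repr.injective (Finsupp.ext fun m => ?_)
    rw [repr_smul_τ_pow, leadCoeff, h, Finsupp.single_apply]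
    split_ifs with hm
    · rw [hm]
    · exact T.repr_eq_zero_of_degτ_lt (by omega)
  rw [hd', pow_zero, T.smul_def, mul_one]
  exact ((T.leadCoeff_ne_zero hd).isUnit).map T.ι

theorem exists_mul_add_mul_eq_one {P b : R}
    (hP : ¬ ∃ f g : R, T.degτ f < T.degτ P ∧ T.degτ g < T.degτ P ∧ P = f * g)
    (hb : b ≠ 0) (hbP : T.degτ b < T.degτ P) : ∃ x y, x * b + y * P = 1 := by
  have := T.isPrincipalIdealRing
  have := T.noZeroDivisors
  obtain ⟨d, hd : Ideal.span {b, P} = Ideal.span {d}⟩ :=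
    Submodule.IsPrincipal.principal (Ideal.span {b, P})
  have hdvd {f : R} (hf : f ∈ ({b, P} : Set R)) : ∃ c, c * d = f :=
    Ideal.mem_span_singleton'.mp (hd ▸ Ideal.subset_span hf)
  obtain ⟨c', rfl⟩ := hdvd (Set.mem_insert _ _)
  obtain ⟨c, rfl⟩ := hdvd (Set.mem_insert_of_mem _ rfl)
  obtain ⟨hc', hd0⟩ := mul_ne_zero_iff.mp hb
  have hc : c ≠ 0 := by
    rintro rfl
    simp [degτ] at hbP
  rw [T.degτ_mul hc hd0, T.degτ_mul hc' hd0] at hbP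
  have hdeg : T.degτ d = 0 := by
    by_contra hdeg
    exact hP ⟨c, d, by rw [T.degτ_mul hc hd0]; omega, by rw [T.degτ_mul hc hd0]; omega, rfl⟩
  obtain ⟨u, rfl⟩ := T.isUnit_of_degτ_eq_zero hd0 hdeg
  exact Ideal.mem_span_pair.mp (hd ▸ Ideal.mem_span_singleton'.mpr ⟨↑u⁻¹, u.inv_mul⟩)

instance finite_degLT (N : ℕ) : Module.Finite k (T.degLT N) :=
  FiniteDimensional.span_of_finite k ((Set.finite_Iio N).image _)

theorem finrank_degLT (N : ℕ) : Module.finrank k (T.degLT N) = N := by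
  rw [degLT, Set.image_eq_range]
  exact (finrank_span_eq_card (T.basis.linearIndependent.comp _ Subtype.val_injective)).trans
    (by simp)

theorem natCard_degLT (N : ℕ) : Nat.card (T.degLT N) = Nat.card k ^ N := by
  rw [Module.natCard_eq_pow_finrank (K := k), finrank_degLT]

theorem exists_eq_mul_add_mul {a b g x y P : R} (ha : a ≠ 0) (hab : a * b = g * P)
    (hxy : x * b + y * P = 1) (f : R) :
    ∃ e v, f = e * b + v * P ∧ e ∈ T.degLT (T.degτ a) := by
  obtain ⟨c, e, hce, he⟩ := T.exists_eq_mul_add ha (f * x)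
  refine ⟨e, c * g + f * y, ?_, he⟩
  calc f = f * (x * b + y * P) := by rw [hxy, mul_one]
    _ = (c * a + e) * b + f * y * P := by rw [mul_add, ← mul_assoc, ← mul_assoc, hce]
    _ = e * b + (c * g + f * y) * P := by rw [add_mul, mul_assoc, hab]; noncomm_ring

theorem degτ_le_degτ_of_mul_eq_mul {a b g x y P : R} (ha : a ≠ 0) (hP : P ≠ 0)
    (hab : a * b = g * P) (hxy : x * b + y * P = 1) : T.degτ P ≤ T.degτ a := by
  have := T.isScalarTower
  by_contra! hlt
  let F : T.degLT (T.degτ a) × T.degLT (T.degτ b) →ₗ[k] R :=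
    (LinearMap.mulRight k b ∘ₗ Submodule.subtype _).coprod
      (LinearMap.mulRight k P ∘ₗ Submodule.subtype _)
  have hrange : T.degLT (T.degτ b + T.degτ P) ≤ LinearMap.range F := by
    intro f hf
    obtain ⟨e, v, rfl, he⟩ := T.exists_eq_mul_add_mul ha hab hxy f
    have heb : e * b ∈ T.degLT (T.degτ b + T.degτ P) :=
      T.degLT_mono (by omega) (T.mul_mem_degLT_add b he)
    have hv : v ∈ T.degLT (T.degτ b) :=
      T.mem_degLT_of_mul_mem hP (by simpa using sub_mem hf heb)
    exact ⟨(⟨e, he⟩, ⟨v, hv⟩), rfl⟩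
  have := (Submodule.finrank_mono hrange).trans F.finrank_range_le
  rw [Module.finrank_prod, finrank_degLT, finrank_degLT, finrank_degLT] at this
  omega

end TwistedPolynomialRing

theorem twisted_quotient_is_semifield_general
    {n s : ℕ} (hs : 0 < s)
    [Fintype k] (hk : Fintype.card k = q ^ n)
    (T : TwistedPolynomialRing q k R)
    (P : R) (hP0 : P ≠ 0)
    (hPdeg : T.degτ P = s)
    (hPirr : ¬ ∃ f g : R, T.degτ f < s ∧ T.degτ g < s ∧ P = f * g)
    (modr : R → R)
    (hmod : ∀ f : R, ∃ g : R, f = g * P + modr f)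
    (hmods : ∀ f : R, modr f = 0 ∨ T.degτ (modr f) < s) :
    (1 : R) ∈ {f : R | f = 0 ∨ T.degτ f < s} ∧
    (∀ f g : R, modr (f + g) = modr f + modr g) ∧
    (∀ b ∈ {f : R | f = 0 ∨ T.degτ f < s}, modr (1 * b) = b ∧ modr (b * 1) = b) ∧
    (∀ a ∈ {f : R | f = 0 ∨ T.degτ f < s}, ∀ b ∈ {f : R | f = 0 ∨ T.degτ f < s},
      modr (a * b) ∈ {f : R | f = 0 ∨ T.degτ f < s}) ∧
    (∀ a ∈ {f : R | f = 0 ∨ T.degτ f < s}, ∀ b ∈ {f : R | f = 0 ∨ T.degτ f < s},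
      a ≠ 0 → b ≠ 0 → modr (a * b) ≠ 0) ∧
    Nat.card {f : R | f = 0 ∨ T.degτ f < s} = q ^ (n * s) := by
  have hS : {f : R | f = 0 ∨ T.degτ f < s} = T.degLT s := Set.ext fun f => T.mem_degLT.symm
  subst hPdeg
  replace hmods (f : R) : modr f ∈ T.degLT (T.degτ P) := T.mem_degLT.mpr (hmods f)
  have hrem {f g e : R} (h : f = g * P + e) (he : e ∈ T.degLT (T.degτ P)) : modr f = e :=
    T.remainder_eq_of_eq_mul_add hmod hmods h he
  simp only [hS, SetLike.mem_coe]
  refine ⟨T.mem_degLT.mpr (Or.inr (T.degτ_one ▸ hs)), fun f g => ?_,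
    fun b hb => ⟨hrem (g := 0) (by simp) hb, hrem (g := 0) (by simp) hb⟩,
    fun a _ b _ => hmods (a * b), ?_, ?_⟩
  · obtain ⟨gf, hf⟩ := hmod f
    obtain ⟨gg, hg⟩ := hmod g
    exact hrem (g := gf + gg) (by rw [add_mul, add_add_add_comm, ← hf, ← hg])
      (add_mem (hmods f) (hmods g))
  · intro a ha b hb ha0 hb0 hab
    obtain ⟨g, hg⟩ := hmod (a * b)
    rw [hab, add_zero] at hg
    obtain ⟨x, y, hxy⟩ := T.exists_mul_add_mul_eq_one hPirr hb0
      ((T.mem_degLT.mp hb).resolve_left hb0)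
    have := T.degτ_le_degτ_of_mul_eq_mul ha0 hP0 hg hxy
    exact this.not_gt ((T.mem_degLT.mp ha).resolve_left ha0)
  · exact (T.natCard_degLT _).trans (by rw [Nat.card_eq_fintype_card, hk, ← pow_mul])

/-- **Sheekey/Gabidulin semifields from twisted polynomials.**
Let `k = F_{q^n}`, `R = k{τ}`, and let `P ∈ R` be monic irreducible of degree `s ≥ 1`.
Let `modr` be the remainder of right division by `P` (i.e. `f = g·P + modr f` with
`modr f = 0` or `deg (modr f) < s`).  Then `S = {f ∈ R : deg f ≤ s - 1}`, with the
addition of `R` and multiplication `a ∘ b = (a·b) mod_r P`, is a semifield of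
order `q^{n·s}`: the remainder operation is additive, `1` is a two-sided unity of
`(S, ∘)`, `S` has no `∘`-zero-divisors, products land in `S`, and `|S| = q^{n·s}`. -/
theorem twisted_quotient_is_semifield
    {n s : ℕ} (hn : 0 < n) (hs : 0 < s)
    {F : Type} [Field F] [Fintype F] (hq : Fintype.card F = q)
    [Fintype k] (hk : Fintype.card k = q ^ n)
    (T : TwistedPolynomialRing q k R)
    (P : R) (hP0 : P ≠ 0)
    (hPdeg : T.degτ P = s)
    (hPmonic : T.basis.repr P s = 1)
    (hPirr : ¬ ∃ f g : R, T.degτ f < s ∧ T.degτ g < s ∧ P = f * g)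
    (modr : R → R)
    (hmod : ∀ f : R, ∃ g : R, f = g * P + modr f)
    (hmods : ∀ f : R, modr f = 0 ∨ T.degτ (modr f) < s) :
    (1 : R) ∈ {f : R | f = 0 ∨ T.degτ f < s} ∧
    (∀ f g : R, modr (f + g) = modr f + modr g) ∧
    (∀ b ∈ {f : R | f = 0 ∨ T.degτ f < s}, modr (1 * b) = b ∧ modr (b * 1) = b) ∧
    (∀ a ∈ {f : R | f = 0 ∨ T.degτ f < s}, ∀ b ∈ {f : R | f = 0 ∨ T.degτ f < s},
      modr (a * b) ∈ {f : R | f = 0 ∨ T.degτ f < s}) ∧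
    (∀ a ∈ {f : R | f = 0 ∨ T.degτ f < s}, ∀ b ∈ {f : R | f = 0 ∨ T.degτ f < s},
      a ≠ 0 → b ≠ 0 → modr (a * b) ≠ 0) ∧
    Nat.card {f : R | f = 0 ∨ T.degτ f < s} = q ^ (n * s) :=
  twisted_quotient_is_semifield_general hs hk T P hP0 hPdeg hPirr modr hmod hmods
end

section
/- Let n = lcm(ℓ, s), g = gcd(ℓ, s), k = F_{q^n}, and let Δ = k(τ) be the central division algebra over K = F_q(π) with π = τ^n and τα = α^q τ. Let Δ(ℓ,s) = F_{q^ℓ}(τ^s) ⊆ Δ. Then the center of Δ(ℓ,s) is K_g = F_{q^g}(π). -/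
/-!
Write an element of `F_{q^ℓ}(τ^s)` as `∑_{i < n, s ∣ i} c_i τ^i` with coefficients in the span of
`F_{q^ℓ}` over the center: the span of these monomials is an algebra of finite dimension over the
center, hence already a division ring. Commuting with a generator `b` of `F_{q^ℓ}ˣ` multiplies
`c_i` by `b^{q^i} - b`, and the powers `τ^i`, `i < n`, are independent over the centralizer of `k`
(a character-sum argument), so only `c_0` survives because `n = lcm(ℓ, s)`. That element commutes
with `τ^ℓ` and `τ^s`, hence with `τ^g`, and averaging over conjugation by `τ^g` puts it into
`F_{q^g}(π)`. The reverse inclusion is a check on generators.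
-/

open Finset

theorem Nat.pow_sub_one_dvd_pow_sub_one_iff {q a b : ℕ} (hq : 1 < q) :
    q ^ a - 1 ∣ q ^ b - 1 ↔ a ∣ b := by
  rw [← Nat.gcd_eq_left_iff_dvd, ← Nat.gcd_eq_left_iff_dvd, Nat.pow_sub_one_gcd_pow_sub_one]
  refine ⟨fun h => ?_, fun h => by rw [h]⟩
  have := Nat.one_le_pow (Nat.gcd a b) q (by omega)
  have := Nat.one_le_pow a q (by omega)
  exact Nat.pow_right_injective hq (show q ^ _ = q ^ _ by omega)

theorem pow_pow_eq_self_of_dvd {M : Type*} [Monoid M] {a : M} {q g d : ℕ} (ha : a ^ q ^ g = a)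
    (hgd : g ∣ d) : a ^ q ^ d = a := by
  obtain ⟨c, rfl⟩ := hgd
  induction c with
  | zero => simp
  | succ c ih => rw [mul_add_one, pow_add, pow_mul, ih, ha]

theorem Commute.pow_gcd_left {G₀ : Type*} [GroupWithZero G₀] {a b : G₀} (ha : a ≠ 0) {ℓ s : ℕ}
    (hℓ : Commute (a ^ ℓ) b) (hs : Commute (a ^ s) b) : Commute (a ^ Nat.gcd ℓ s) b := by
  have h := (hℓ.zpow_left₀ (Nat.gcdA ℓ s)).mul_left (hs.zpow_left₀ (Nat.gcdB ℓ s))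
  rwa [← zpow_natCast, ← zpow_natCast, ← zpow_mul, ← zpow_mul, ← zpow_add₀ ha,
    ← Nat.gcd_eq_gcd_ab, zpow_natCast] at h

namespace FiniteField

variable {k : Type*} [Field k] [Fintype k] {q n : ℕ}

theorem exists_ringHom_eq_pow (hk : Fintype.card k = q ^ n) : ∃ φ : k →+* k, ∀ a, φ a = a ^ q := by
  have hn : n ≠ 0 := by
    rintro rfl
    simpa [hk] using Fintype.one_lt_card (α := k)
  obtain ⟨p, hchar, d, hp, hcard⟩ := FiniteField.card' k
  have : Fact p.Prime := ⟨hp⟩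
  obtain ⟨e, -, rfl⟩ : ∃ e ≤ (d : ℕ), q = p ^ e :=
    (Nat.dvd_prime_pow hp).1 (hcard ▸ hk ▸ dvd_pow_self q hn)
  exact ⟨iterateFrobenius k p e, fun a => by rw [iterateFrobenius_def]⟩

open Polynomial in
theorem exists_sum_pow_ne_zero (s : Finset ℕ) (hs : s.Nonempty)
    (hlt : ∀ e ∈ s, e < Fintype.card k) : ∃ u : k, ∑ e ∈ s, u ^ e ≠ 0 := by
  classical
  by_contra! h
  obtain ⟨e₀, he₀⟩ := hs
  have hcoeff : (∑ e ∈ s, (X : k[X]) ^ e).coeff e₀ = 1 := by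
    simp [coeff_X_pow, he₀]
  have hdeg : (∑ e ∈ s, (X : k[X]) ^ e).natDegree < Fintype.card k :=
    (natDegree_sum_le_of_forall_le s _ (n := Fintype.card k - 1) fun e he => by
      have := hlt e he
      rw [natDegree_X_pow]
      omega).trans_lt (by have := Fintype.card_pos (α := k); omega)
  have hzero : ∑ e ∈ s, (X : k[X]) ^ e = 0 :=
    eq_zero_of_natDegree_lt_card_of_eval_eq_zero _ Function.injective_id
      (fun u => by simpa [eval_finsetSum] using h u) hdeg
  simp [hzero] at hcoeff

theorem sum_units_pow_pow_mul_inv_pow_pow [DecidableEq k] (hq : 1 < q)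
    (hk : Fintype.card k = q ^ n) {i j : ℕ} (hi : i < n) (hj : j < n) :
    ∑ u : kˣ, (u : k) ^ q ^ j * (u : k)⁻¹ ^ q ^ i = if i = j then -1 else 0 := by
  have hle : ∀ {r}, r < n → q ^ r ≤ q ^ n - 1 := fun hr =>
    Nat.le_sub_one_of_lt (Nat.pow_lt_pow_right hq hr)
  have hpos (r : ℕ) : 0 < q ^ r := Nat.pow_pos (by omega)
  obtain ⟨m, hm⟩ : ∃ m, m + q ^ i = q ^ j + (q ^ n - 1) :=
    ⟨_, Nat.sub_add_cancel (by have := hle hi; omega)⟩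
  have hterm (u : kˣ) : (u : k) ^ q ^ j * (u : k)⁻¹ ^ q ^ i = (u : k) ^ m := by
    have hcyc : (u : k) ^ m * (u : k) ^ q ^ i = (u : k) ^ q ^ j := by
      rw [← pow_add, hm, ← hk, pow_add, FiniteField.pow_card_sub_one_eq_one _ u.ne_zero, mul_one]
    rw [← hcyc, inv_pow, mul_inv_cancel_right₀ (pow_ne_zero _ u.ne_zero)]
  have hdvd : q ^ n - 1 ∣ m ↔ i = j := by
    refine ⟨fun h => ?_, by rintro rfl; simp [show m = q ^ n - 1 by omega]⟩
    have hmN := Nat.eq_of_dvd_of_lt_two_mul (by have := hle hi; have := hpos j; omega) h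
      (by have := hle hj; have := hpos i; omega)
    exact Nat.pow_right_injective hq (show q ^ i = q ^ j by omega)
  simp only [hterm, FiniteField.sum_pow_units, hk, hdvd]

theorem exists_pow_pow_eq_self_iff_dvd (hq : 1 < q) (hk : Fintype.card k = q ^ n) {ℓ : ℕ}
    (hℓn : ℓ ∣ n) : ∃ b : k, ∀ i, b ^ q ^ i = b ↔ ℓ ∣ i := by
  classical
  obtain ⟨ζ, hζ⟩ := IsCyclic.exists_ofOrder_eq_natCard (α := kˣ)
  rw [Nat.card_eq_fintype_card, Fintype.card_units, hk] at hζ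
  have hqn : q ^ n - 1 ≠ 0 := by have := hk ▸ Fintype.one_lt_card (α := k); omega
  obtain ⟨β, hβ⟩ : ∃ β : kˣ, orderOf β = q ^ ℓ - 1 :=
    ⟨_, orderOf_pow_orderOf_div (hζ ▸ hqn) (hζ ▸ Nat.pow_sub_one_dvd_pow_sub_one q hℓn)⟩
  refine ⟨β, fun i => ?_⟩
  rw [← Units.val_pow_eq_pow_val, Units.val_inj,
    ← Nat.sub_add_cancel (Nat.one_le_pow i q (by omega)), pow_succ, mul_eq_right,
    ← orderOf_dvd_iff_pow_eq_one, hβ, Nat.pow_sub_one_dvd_pow_sub_one_iff hq]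

-- The trace of `k` down to its subfield fixed by `x ↦ x ^ Q`, when `Fintype.card k = Q ^ m`.
def frobeniusTrace (Q m : ℕ) (u : k) : k := ∑ j ∈ range m, u ^ Q ^ j

theorem frobeniusTrace_pow_eq_self (hk : Fintype.card k = q ^ n) (u : k) :
    frobeniusTrace q n u ^ q = frobeniusTrace q n u := by
  obtain ⟨φ, hφ⟩ := exists_ringHom_eq_pow hk
  have hshift := sum_range_succ' (fun j => u ^ q ^ j) n
  rw [sum_range_succ, ← hk, FiniteField.pow_card, pow_zero, pow_one] at hshift
  rw [frobeniusTrace, ← hφ, map_sum]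
  simp only [hφ, ← pow_mul, ← pow_succ]
  exact (add_right_cancel hshift).symm

theorem exists_frobeniusTrace_ne_zero (hq : 1 < q) (hk : Fintype.card k = q ^ n) :
    ∃ u : k, frobeniusTrace q n u ≠ 0 := by
  have hn : n ≠ 0 := by
    rintro rfl
    simpa [hk] using Fintype.one_lt_card (α := k)
  obtain ⟨u, hu⟩ := exists_sum_pow_ne_zero (k := k) ((range n).image (q ^ ·))
    ((nonempty_range_iff.2 hn).image _) fun e he => by
      obtain ⟨j, hj, rfl⟩ := mem_image.1 he
      exact hk ▸ Nat.pow_lt_pow_right hq (mem_range.1 hj)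
  exact ⟨u, by rwa [frobeniusTrace, ← sum_image (Nat.pow_right_injective hq).injOn]⟩

end FiniteField

theorem Submodule.span_center_subset_centralizer {Δ : Type*} [Ring Δ] {S T : Set Δ}
    (h : S ⊆ T.centralizer) : (span (Subring.center Δ) S : Set Δ) ⊆ T.centralizer := by
  rw [← Subalgebra.coe_centralizer (Subring.center Δ)] at h ⊢
  exact (span_le (p := Subalgebra.toSubmodule (Subalgebra.centralizer _ T))).2 h

theorem Submodule.span_center_subset_subfield {Δ : Type*} [DivisionRing Δ] {S : Set Δ}
    {E : Subfield Δ} (hZ : (Subring.center Δ : Set Δ) ⊆ E) (hS : S ⊆ E) :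
    (span (Subring.center Δ) S : Set Δ) ⊆ E := by
  intro x hx
  induction hx using span_induction with
  | mem x hx => exact hS hx
  | zero => exact E.zero_mem
  | add x y _ _ hx hy => exact E.add_mem hx hy
  | smul z x _ hx => exact E.mul_mem (hZ z.2) hx

def Subfield.centralizer {Δ : Type*} [DivisionRing Δ] (s : Set Δ) : Subfield Δ :=
  { Subring.centralizer s with inv_mem' := fun _ => Set.inv_mem_centralizer₀ }

theorem Subfield.commute_of_mem_closure {Δ : Type*} [DivisionRing Δ] {S T : Set Δ}
    (h : ∀ x ∈ S, ∀ y ∈ T, Commute x y) {x y : Δ} (hx : x ∈ closure S) (hy : y ∈ closure T) :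
    Commute x y := by
  have hT : closure T ≤ centralizer S := closure_le.2 fun y hy x hx => (h x hx y hy).eq
  have hS : closure S ≤ centralizer (closure T) := closure_le.2 fun x hx y hy => (hT hy x hx).symm
  exact (hS hx y hy).symm

namespace CyclicAlgebra

variable {k Δ : Type*} [Field k] [DivisionRing Δ] {ι : k →+* Δ} {τ : Δ} {q : ℕ}

theorem pow_mul_map_eq (hcomm : ∀ a, τ * ι a = ι (a ^ q) * τ) (i : ℕ) (a : k) :
    τ ^ i * ι a = ι (a ^ q ^ i) * τ ^ i := by
  induction i generalizing a with
  | zero => simp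
  | succ i ih => rw [pow_succ, mul_assoc, hcomm, ← mul_assoc, ih, mul_assoc, ← pow_succ,
      ← pow_mul, ← pow_succ']

theorem eq_zero_of_sum_mul_pow_eq_zero [Fintype k] {n : ℕ} (hq : 1 < q)
    (hk : Fintype.card k = q ^ n) (hτ : τ ≠ 0) (hcomm : ∀ a, τ * ι a = ι (a ^ q) * τ)
    {c : ℕ → Δ} (hc : ∀ i a, Commute (c i) (ι a)) (hsum : ∑ i ∈ range n, c i * τ ^ i = 0)
    {j : ℕ} (hj : j < n) : c j = 0 := by
  classical
  have hterm (u : kˣ) (i : ℕ) : ι ((u : k) ^ q ^ j) * (c i * τ ^ i) * ι (u : k)⁻¹ =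
      c i * ι ((u : k) ^ q ^ j * (u : k)⁻¹ ^ q ^ i) * τ ^ i := by
    rw [mul_assoc, mul_assoc, pow_mul_map_eq hcomm, ← mul_assoc, ← mul_assoc,
      ← (hc i _).eq, map_mul, mul_assoc (c i)]
  have hsum' : ∑ u : kˣ, ι ((u : k) ^ q ^ j) * (∑ i ∈ range n, c i * τ ^ i) * ι (u : k)⁻¹ =
      -(c j * τ ^ j) := by
    simp only [mul_sum, sum_mul, hterm]
    rw [sum_comm]
    simp only [← sum_mul, ← mul_sum, ← map_sum]
    rw [sum_eq_single_of_mem j (mem_range.2 hj) fun i hi hij => by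
        rw [FiniteField.sum_units_pow_pow_mul_inv_pow_pow hq hk (mem_range.1 hi) hj, if_neg hij,
          map_zero, mul_zero, zero_mul],
      FiniteField.sum_units_pow_pow_mul_inv_pow_pow hq hk hj hj, if_pos rfl, map_neg, map_one,
      mul_neg_one, neg_mul]
  simp only [hsum, mul_zero, zero_mul, sum_const_zero, zero_eq_neg] at hsum'
  exact (mul_eq_zero.1 hsum').resolve_right (pow_ne_zero _ hτ)

theorem eq_zero_of_commute_sum_mul_pow [Fintype k] {n : ℕ} (hq : 1 < q)
    (hk : Fintype.card k = q ^ n) (hτ : τ ≠ 0) (hcomm : ∀ a, τ * ι a = ι (a ^ q) * τ)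
    {c : ℕ → Δ} (hc : ∀ i a, Commute (c i) (ι a)) {b : k}
    (hb : Commute (∑ i ∈ range n, c i * τ ^ i) (ι b)) {j : ℕ} (hj : j < n) (hbj : b ^ q ^ j ≠ b) :
    c j = 0 := by
  set d : ℕ → Δ := fun i => ι (b ^ q ^ i) - ι b
  have hd : ∀ i a, Commute (d i) (ι a) := fun i a => by
    simp only [d, ← map_sub]
    exact (Commute.all _ a).map ι
  have hright : (∑ i ∈ range n, c i * τ ^ i) * ι b =
      ∑ i ∈ range n, c i * ι (b ^ q ^ i) * τ ^ i := by
    simp only [sum_mul, mul_assoc, pow_mul_map_eq hcomm]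
  have hleft : ι b * ∑ i ∈ range n, c i * τ ^ i = ∑ i ∈ range n, c i * ι b * τ ^ i := by
    simp only [mul_sum, ← mul_assoc, (hc _ b).eq]
  have hsum : ∑ i ∈ range n, c i * d i * τ ^ i = 0 := by
    rw [← sub_eq_zero.2 hb.eq, hright, hleft, ← sum_sub_distrib]
    simp only [d, mul_sub, sub_mul]
  have hcd := eq_zero_of_sum_mul_pow_eq_zero hq hk hτ hcomm
    (fun i a => (hc i a).mul_left (hd i a)) hsum hj
  exact (mul_eq_zero.1 hcd).resolve_right (sub_ne_zero.2 fun h => hbj (ι.injective h))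

theorem commute_map_of_mem_span {S : Set k} {y : Δ}
    (hy : y ∈ Submodule.span (Subring.center Δ) (ι '' S)) (a : k) : Commute y (ι a) := by
  refine (Submodule.span_center_subset_centralizer (T := Set.range ι) ?_ hy _ ⟨a, rfl⟩).symm
  rintro _ ⟨b, -, rfl⟩ _ ⟨a, rfl⟩
  exact ((Commute.all a b).map ι).eq

theorem commute_pow_of_mem_span (hcomm : ∀ a, τ * ι a = ι (a ^ q) * τ) {d : ℕ} {y : Δ}
    (hy : y ∈ Submodule.span (Subring.center Δ) (ι '' {a | a ^ q ^ d = a})) :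
    Commute (τ ^ d) y := by
  refine Submodule.span_center_subset_centralizer ?_ hy _ rfl
  rintro _ ⟨b, hb, rfl⟩ _ rfl
  rw [pow_mul_map_eq hcomm, hb]

theorem sum_pow_mul_map_mul_mul_pow (hcomm : ∀ a, τ * ι a = ι (a ^ q) * τ) {g m : ℕ} {y : Δ}
    (hy : Commute (τ ^ g) y) (a : k) :
    ∑ j ∈ range m, τ ^ (g * j) * (ι a * y) * τ ^ (g * (m - j)) =
      ι (FiniteField.frobeniusTrace (q ^ g) m a) * y * τ ^ (g * m) := by
  rw [FiniteField.frobeniusTrace, map_sum, sum_mul, sum_mul]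
  refine sum_congr rfl fun j hj => ?_
  rw [← mul_assoc, pow_mul_map_eq hcomm, mul_assoc _ _ y, pow_mul τ g j, (hy.pow_left j).eq,
    ← pow_mul τ g j, mul_assoc, mul_assoc, ← pow_add, ← mul_add,
    Nat.add_sub_cancel' (mem_range.1 hj).le, ← mul_assoc, pow_mul q g j]

section TwistedSpan

variable (ι τ) in
def twistedSpan (F : Set k) (s n : ℕ) : Submodule (Subring.center Δ) Δ :=
  Submodule.span _ ((fun p : k × ℕ => ι p.1 * τ ^ p.2) '' (F ×ˢ {i | i < n ∧ s ∣ i}))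

variable {F : Set k} {s n : ℕ}

theorem mul_map_pow_mem_twistedSpan {b : k} {i : ℕ} (hb : b ∈ F) (hi : i < n) (hsi : s ∣ i) :
    ι b * τ ^ i ∈ twistedSpan ι τ F s n :=
  Submodule.subset_span ⟨(b, i), ⟨hb, hi, hsi⟩, rfl⟩

theorem mul_mem_twistedSpan (hcomm : ∀ a, τ * ι a = ι (a ^ q) * τ)
    (hπ : τ ^ n ∈ Subring.center Δ) (hsn : s ∣ n) (hFmul : ∀ a ∈ F, ∀ b ∈ F, a * b ∈ F)
    (hFpow : ∀ a ∈ F, a ^ q ∈ F) {x y : Δ} (hx : x ∈ twistedSpan ι τ F s n)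
    (hy : y ∈ twistedSpan ι τ F s n) : x * y ∈ twistedSpan ι τ F s n := by
  have hFpow' (a : k) (ha : a ∈ F) (i : ℕ) : a ^ q ^ i ∈ F := by
    induction i with
    | zero => simpa using ha
    | succ i ih => simpa [pow_succ, pow_mul] using hFpow _ ih
  have hgen : ∀ u ∈ (fun p : k × ℕ => ι p.1 * τ ^ p.2) '' (F ×ˢ {i | i < n ∧ s ∣ i}),
      ∀ v ∈ (fun p : k × ℕ => ι p.1 * τ ^ p.2) '' (F ×ˢ {i | i < n ∧ s ∣ i}),
      u * v ∈ twistedSpan ι τ F s n := by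
    rintro _ ⟨⟨b, i⟩, ⟨hb, hi, hsi⟩, rfl⟩ _ ⟨⟨b', j⟩, ⟨hb', hj, hsj⟩, rfl⟩
    have hbb' : b * b' ^ q ^ i ∈ F := hFmul _ hb _ (hFpow' _ hb' i)
    have hprod : ι b * τ ^ i * (ι b' * τ ^ j) = ι (b * b' ^ q ^ i) * τ ^ (i + j) := by
      rw [mul_assoc, ← mul_assoc (τ ^ i), pow_mul_map_eq hcomm, map_mul, pow_add]
      simp only [mul_assoc]
    rw [hprod]
    by_cases hij : i + j < n
    · exact mul_map_pow_mem_twistedSpan hbb' hij (dvd_add hsi hsj)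
    · obtain ⟨r, hr⟩ : ∃ r, i + j = r + n := ⟨i + j - n, by omega⟩
      have hmem : ι (b * b' ^ q ^ i) * τ ^ r ∈ twistedSpan ι τ F s n :=
        mul_map_pow_mem_twistedSpan hbb' (by omega)
          ((Nat.dvd_add_right hsn).1 (by rw [add_comm, ← hr]; exact dvd_add hsi hsj))
      rw [hr, pow_add, ← mul_assoc, Subring.mem_center_iff.1 hπ]
      exact Submodule.smul_mem _ (⟨τ ^ n, hπ⟩ : Subring.center Δ) hmem
  have hxy := Submodule.mul_mem_mul hx hy
  rw [twistedSpan, Submodule.span_mul_span] at hxy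
  exact Submodule.span_le.2 (Set.mul_subset_iff.2 hgen) hxy

theorem closure_subset_twistedSpan [Finite k] (hcomm : ∀ a, τ * ι a = ι (a ^ q) * τ)
    (hπ : τ ^ n ∈ Subring.center Δ) (hn : 0 < n) (hsn : s ∣ n) (hF1 : 1 ∈ F)
    (hFmul : ∀ a ∈ F, ∀ b ∈ F, a * b ∈ F) (hFpow : ∀ a ∈ F, a ^ q ∈ F) :
    (Subfield.closure (ι '' F ∪ {τ ^ s}) : Set Δ) ⊆ twistedSpan ι τ F s n := by
  have hpow_mem {i : ℕ} (hi : i < n) (hsi : s ∣ i) : τ ^ i ∈ twistedSpan ι τ F s n := by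
    simpa using mul_map_pow_mem_twistedSpan (ι := ι) (τ := τ) hF1 hi hsi
  have hone : (1 : Δ) ∈ twistedSpan ι τ F s n := by simpa using hpow_mem hn (dvd_zero s)
  let A : Subalgebra (Subring.center Δ) Δ := (twistedSpan ι τ F s n).toSubalgebra hone
    fun _ _ => mul_mem_twistedSpan hcomm hπ hsn hFmul hFpow
  have hfg : (Subalgebra.toSubmodule A).FG :=
    Submodule.fg_span (((Set.toFinite F).prod
      ((Set.finite_lt_nat n).subset fun i hi => hi.1)).image _)
  let E : Subfield Δ :=
    { A.toSubring with
      inv_mem' := fun x hx => (IsIntegral.of_mem_of_fg A hfg x hx).inv_mem hx }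
  refine Subfield.closure_le (t := E) |>.2 (Set.union_subset ?_ ?_)
  · rintro _ ⟨b, hb, rfl⟩
    show ι b ∈ twistedSpan ι τ F s n
    simpa using mul_map_pow_mem_twistedSpan (ι := ι) (τ := τ) hb hn (dvd_zero s)
  · rintro _ rfl
    show τ ^ s ∈ twistedSpan ι τ F s n
    rcases (Nat.le_of_dvd hn hsn).lt_or_eq with hlt | rfl
    · exact hpow_mem hlt dvd_rfl
    · simpa [Subring.smul_def] using Submodule.smul_mem _ (⟨τ ^ s, hπ⟩ : Subring.center Δ) hone

theorem exists_coeff_of_mem_twistedSpan {x : Δ} (hx : x ∈ twistedSpan ι τ F s n) :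
    ∃ c : ℕ → Δ, (∀ i, c i ∈ Submodule.span (Subring.center Δ) (ι '' F)) ∧
      (∀ i, ¬ s ∣ i → c i = 0) ∧ x = ∑ i ∈ range n, c i * τ ^ i := by
  classical
  induction hx using Submodule.span_induction with
  | mem x hx =>
    obtain ⟨⟨b, i⟩, ⟨hb, hi, hsi⟩, rfl⟩ := hx
    refine ⟨fun j => if j = i then ι b else 0, fun j => ?_, fun j hj => ?_, ?_⟩
    · dsimp only
      split_ifs
      exacts [Submodule.subset_span ⟨b, hb, rfl⟩, Submodule.zero_mem _]
    · refine if_neg ?_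
      rintro rfl
      exact hj hsi
    · simp [hi]
  | zero => exact ⟨0, fun _ => Submodule.zero_mem _, fun _ _ => rfl, by simp⟩
  | add x y _ _ hx hy =>
    obtain ⟨c, hc, hcs, rfl⟩ := hx
    obtain ⟨d, hd, hds, rfl⟩ := hy
    exact ⟨c + d, fun i => Submodule.add_mem _ (hc i) (hd i),
      fun i hi => by simp [hcs i hi, hds i hi], by simp [add_mul, sum_add_distrib]⟩
  | smul z x _ hx =>
    obtain ⟨c, hc, hcs, rfl⟩ := hx
    exact ⟨fun i => z • c i, fun i => Submodule.smul_mem _ z (hc i),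
      fun i hi => by simp [hcs i hi], by simp [smul_sum]⟩

end TwistedSpan

-- Averaging `ι u * x` over conjugation by the powers of `τ ^ g` gives `ι (tr u) * x * τ ^ n`, where
-- `tr` is the trace down to the fixed field of `a ↦ a ^ q ^ g`; take `u` of nonzero trace.
theorem mem_of_commute_pow [Fintype k] {n g : ℕ} {E : Subfield Δ} (hq : 1 < q)
    (hk : Fintype.card k = q ^ n) (hτ : τ ≠ 0)
    (hcomm : ∀ a, τ * ι a = ι (a ^ q) * τ) (hg : 0 < g) (hgn : g ∣ n)
    (hZE : (Subring.center Δ : Set Δ) ⊆ E) (hιE : ∀ a, a ^ q ^ g = a → ι a ∈ E)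
    (hτE : τ ^ n ∈ E) {x : Δ} (hx : x ∈ Submodule.span (Subring.center Δ) (Set.range ι))
    (hxτ : Commute (τ ^ g) x) : x ∈ E := by
  obtain ⟨m, rfl⟩ := hgn
  have hk' : Fintype.card k = (q ^ g) ^ m := by rw [hk, pow_mul]
  obtain ⟨u, hu⟩ := FiniteField.exists_frobeniusTrace_ne_zero (Nat.one_lt_pow hg.ne' hq) hk'
  have htrace (a : k) : ι (FiniteField.frobeniusTrace (q ^ g) m a) ∈ E :=
    hιE _ (FiniteField.frobeniusTrace_pow_eq_self hk' a)
  let T : Δ →ₗ[Subring.center Δ] Δ := ∑ j ∈ range m,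
    LinearMap.mulLeftRight _ (τ ^ (g * j), τ ^ (g * (m - j))) ∘ₗ LinearMap.mulLeft _ (ι u)
  have hT (y : Δ) : T y = ∑ j ∈ range m, τ ^ (g * j) * (ι u * y) * τ ^ (g * (m - j)) := by
    simp [T]
  have hTι : T '' Set.range ι ⊆ E := by
    rintro _ ⟨_, ⟨b, rfl⟩, rfl⟩
    rw [hT, ← mul_one (ι u * ι b), ← map_mul,
      sum_pow_mul_map_mul_mul_pow hcomm (Commute.one_right _), mul_one]
    exact E.mul_mem (htrace _) hτE
  have hTx : T x ∈ E := Submodule.span_center_subset_subfield hZE hTι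
    (Submodule.image_span_subset_span T _ ⟨x, hx, rfl⟩)
  rw [hT, sum_pow_mul_map_mul_mul_pow hcomm hxτ] at hTx
  have hιu : ι (FiniteField.frobeniusTrace (q ^ g) m u) ≠ 0 := (map_ne_zero ι).2 hu
  have hx_eq : x = (ι (FiniteField.frobeniusTrace (q ^ g) m u))⁻¹ *
      (ι (FiniteField.frobeniusTrace (q ^ g) m u) * x * τ ^ (g * m)) * (τ ^ (g * m))⁻¹ := by
    simp [mul_assoc, hιu, hτ]
  rw [hx_eq]
  exact E.mul_mem (E.mul_mem (E.inv_mem (htrace u)) hTx) (E.inv_mem hτE)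

-- `Δ(ℓ, s) = F_{q^ℓ}(τ^s)`; the center `F_{q^g}(π)` of the theorem is `Δ(g, n)`.
variable (ι τ) in
def deltaSubfield (q ℓ s : ℕ) : Subfield Δ := Subfield.closure (ι '' {a | a ^ q ^ ℓ = a} ∪ {τ ^ s})

theorem deltaSubfield_mono {ℓ ℓ' s s' : ℕ} (hℓ : ℓ' ∣ ℓ) (hs : s ∣ s') :
    deltaSubfield ι τ q ℓ' s' ≤ deltaSubfield ι τ q ℓ s := by
  refine Subfield.closure_le.2 (Set.union_subset ?_ ?_)
  · rintro _ ⟨a, ha, rfl⟩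
    exact Subfield.subset_closure (Or.inl ⟨a, pow_pow_eq_self_of_dvd ha hℓ, rfl⟩)
  · rintro _ rfl
    obtain ⟨t, rfl⟩ := hs
    have hτs : τ ^ s ∈ deltaSubfield ι τ q ℓ s := Subfield.subset_closure (Or.inr rfl)
    rw [pow_mul]
    exact pow_mem hτs t

theorem commute_of_mem_deltaSubfield [Fintype k] {n g ℓ s : ℕ} (hk : Fintype.card k = q ^ n)
    (hcomm : ∀ a, τ * ι a = ι (a ^ q) * τ) (hgs : g ∣ s) {x y : Δ}
    (hx : x ∈ deltaSubfield ι τ q g n) (hy : y ∈ deltaSubfield ι τ q ℓ s) : Commute x y := by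
  refine Subfield.commute_of_mem_closure ?_ hx hy
  rintro _ (⟨a, ha, rfl⟩ | rfl) _ (⟨b, -, rfl⟩ | rfl)
  · exact (Commute.all a b).map ι
  · exact (pow_mul_map_eq hcomm s a).trans (by rw [pow_pow_eq_self_of_dvd ha hgs])
      |>.symm
  · rw [Commute, SemiconjBy, pow_mul_map_eq hcomm, ← hk, FiniteField.pow_card]
  · exact Commute.pow_pow_self τ n s

theorem mem_span_of_forall_commute [Fintype k] {n ℓ s : ℕ} (hq : 1 < q)
    (hk : Fintype.card k = q ^ n) (hτ : τ ≠ 0) (hcomm : ∀ a, τ * ι a = ι (a ^ q) * τ)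
    (hπ : τ ^ n ∈ Subring.center Δ) (hℓ : 0 < ℓ) (hs : 0 < s) (hn : n = Nat.lcm ℓ s) {x : Δ}
    (hx : x ∈ deltaSubfield ι τ q ℓ s) (hxc : ∀ y ∈ deltaSubfield ι τ q ℓ s, Commute y x) :
    x ∈ Submodule.span (Subring.center Δ) (ι '' {a | a ^ q ^ ℓ = a}) := by
  have hn0 : 0 < n := hn ▸ Nat.lcm_pos hℓ hs
  have hℓn : ℓ ∣ n := hn ▸ Nat.dvd_lcm_left ℓ s
  have hspan := closure_subset_twistedSpan (F := {a : k | a ^ q ^ ℓ = a}) (s := s)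
    hcomm hπ hn0 (hn ▸ Nat.dvd_lcm_right ℓ s) (one_pow _)
    (fun a (ha : a ^ q ^ ℓ = a) b (hb : b ^ q ^ ℓ = b) => show (a * b) ^ q ^ ℓ = a * b by
      rw [mul_pow, ha, hb])
    (fun a (ha : a ^ q ^ ℓ = a) => show (a ^ q) ^ q ^ ℓ = a ^ q by rw [pow_right_comm, ha])
  obtain ⟨c, hcF, hcs, rfl⟩ := exists_coeff_of_mem_twistedSpan (hspan hx)
  obtain ⟨b, hb⟩ := FiniteField.exists_pow_pow_eq_self_iff_dvd hq hk hℓn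
  have hxb := hxc _ (Subfield.subset_closure (Or.inl ⟨b, (hb ℓ).2 dvd_rfl, rfl⟩))
  suffices ∑ i ∈ range n, c i * τ ^ i = c 0 by rw [this]; exact hcF 0
  rw [sum_eq_single_of_mem 0 (mem_range.2 hn0) fun i hi hi0 => ?_, pow_zero, mul_one]
  by_cases hsi : s ∣ i
  · have hℓi : ¬ ℓ ∣ i := fun hℓi =>
      hi0 (Nat.eq_zero_of_dvd_of_lt (hn ▸ Nat.lcm_dvd hℓi hsi) (mem_range.1 hi))
    rw [eq_zero_of_commute_sum_mul_pow hq hk hτ hcomm (fun i => commute_map_of_mem_span (hcF i))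
      hxb.symm (mem_range.1 hi) (mt (hb i).1 hℓi), zero_mul]
  · rw [hcs i hsi, zero_mul]

end CyclicAlgebra

theorem center_of_Delta_ls_general
    {q ℓ s n g : ℕ} (hq : 1 < q) (hℓ : 0 < ℓ) (hs : 0 < s)
    (hn : n = Nat.lcm ℓ s) (hg : g = Nat.gcd ℓ s)
    {k Δ : Type} [Field k] [Fintype k] (hk : Fintype.card k = q ^ n)
    [DivisionRing Δ] (ι : k →+* Δ) (τ : Δ) (hτ : τ ≠ 0)
    (hcomm : ∀ a : k, τ * ι a = ι (a ^ q) * τ)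
    (hZ : (Subring.center Δ : Set Δ) =
      ↑(Subfield.closure ((ι '' {a : k | a ^ q = a}) ∪ {τ ^ n}))) :
    {x : Δ | x ∈ Subfield.closure ((ι '' {a : k | a ^ q ^ ℓ = a}) ∪ {τ ^ s}) ∧
        ∀ y ∈ Subfield.closure ((ι '' {a : k | a ^ q ^ ℓ = a}) ∪ {τ ^ s}), y * x = x * y} =
      ↑(Subfield.closure ((ι '' {a : k | a ^ q ^ g = a}) ∪ {τ ^ n})) := by
  have hgℓ : g ∣ ℓ := hg ▸ Nat.gcd_dvd_left ℓ s
  have hZ' : (Subring.center Δ : Set Δ) = CyclicAlgebra.deltaSubfield ι τ q 1 n := by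
    rw [hZ, CyclicAlgebra.deltaSubfield, pow_one]
  have hπ : τ ^ n ∈ Subring.center Δ := by
    rw [← SetLike.mem_coe, hZ']
    exact Subfield.subset_closure (Or.inr rfl)
  ext x
  constructor
  · rintro ⟨hxA, hxc⟩
    have hx₀ := CyclicAlgebra.mem_span_of_forall_commute hq hk hτ hcomm hπ hℓ hs hn hxA hxc
    have hxτ : Commute (τ ^ g) x := hg ▸ Commute.pow_gcd_left hτ
      (CyclicAlgebra.commute_pow_of_mem_span hcomm hx₀)
      (hxc _ (Subfield.subset_closure (Or.inr rfl)))
    exact CyclicAlgebra.mem_of_commute_pow hq hk hτ hcomm (hg ▸ Nat.gcd_pos_of_pos_left s hℓ)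
      (hgℓ.trans (hn ▸ Nat.dvd_lcm_left ℓ s))
      (hZ' ▸ CyclicAlgebra.deltaSubfield_mono (one_dvd g) dvd_rfl)
      (fun a ha => Subfield.subset_closure (Or.inl ⟨a, ha, rfl⟩))
      (Subfield.subset_closure (Or.inr rfl))
      (Submodule.span_mono (Set.image_subset_range _ _) hx₀) hxτ
  · intro hx
    refine ⟨CyclicAlgebra.deltaSubfield_mono hgℓ (hn ▸ Nat.dvd_lcm_right ℓ s) hx, fun y hy => ?_⟩
    exact (CyclicAlgebra.commute_of_mem_deltaSubfield hk hcomm (hg ▸ Nat.gcd_dvd_right ℓ s)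
      hx hy).eq.symm

/-- **Center of the subalgebra `Δ(ℓ,s) = F_{q^ℓ}(τ^s)` of `Δ = k(τ)`.**
Let `n = lcm(ℓ,s)`, `g = gcd(ℓ,s)`, `k = F_{q^n}`, and let `Δ = k(τ)` be the
central division algebra over `K = F_q(π)` (`π = τ^n`, `τ α = α^q τ`), i.e. the
division ring generated by `k` and `τ` with center `K`.  Then the center of the
division subalgebra `Δ(ℓ,s) = F_{q^ℓ}(τ^s)` is `K_g = F_{q^g}(π)`.
(Subfields `F_{q^m} ⊆ k` are realized as `{a : k | a^{q^m} = a}`.) -/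
theorem center_of_Delta_ls
    {q ℓ s n g : ℕ} (hq : 1 < q) (hℓ : 0 < ℓ) (hs : 0 < s)
    (hn : n = Nat.lcm ℓ s) (hg : g = Nat.gcd ℓ s)
    {k Δ : Type} [Field k] [Fintype k] (hk : Fintype.card k = q ^ n)
    [DivisionRing Δ] (ι : k →+* Δ) (τ : Δ) (hτ : τ ≠ 0)
    (hcomm : ∀ a : k, τ * ι a = ι (a ^ q) * τ)
    (hgen : Subfield.closure (Set.range ι ∪ {τ}) = ⊤)
    (hZ : (Subring.center Δ : Set Δ) =
      ↑(Subfield.closure ((ι '' {a : k | a ^ q = a}) ∪ {τ ^ n}))) :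
    {x : Δ | x ∈ Subfield.closure ((ι '' {a : k | a ^ q ^ ℓ = a}) ∪ {τ ^ s}) ∧
        ∀ y ∈ Subfield.closure ((ι '' {a : k | a ^ q ^ ℓ = a}) ∪ {τ ^ s}), y * x = x * y} =
      ↑(Subfield.closure ((ι '' {a : k | a ^ q ^ g = a}) ∪ {τ ^ n})) :=
  center_of_Delta_ls_general hq hℓ hs hn hg hk ι τ hτ hcomm hZ
end

section
/- Let F_p = F_q[T]/(p) be the residue field of a monic irreducible p ∈ F_q[T] of degree d, and let m(x) ∈ F_p[x] be monic irreducible with m(0) a generator of F_p over F_q (i.e., F_q(m(0)) = F_p). Then the norm Nr_{F_p/F_q}(m(x)) = ∏_{i=0}^{d−1} m^{(q^i)}(x) is irreducible in F_q[x]. -/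
/-!
Let `α` be the root of `m` in `L = K[x]/(m)`, where `K = F[T]/(p)`. For finite fields the norm
`N_{L/K}(α)` is a power of `α`, and it equals `±m(0)`. Since `m(0)` generates `K` over `F`, the
field `F(α)` contains `K`, hence `F(α) = K(α) = L` and `α` has degree `[K : F] · deg m` over `F`.
The Frobenius norm of `m` is fixed by the Frobenius acting on coefficients, so it descends to
`F[x]`; it is monic of degree `[K : F] · deg m` and vanishes at `α`, so it is the minimal
polynomial of `α` over `F`.
-/

open Polynomial FiniteField

theorem Finset.prod_range_shift_of_eq {M : Type*} [CommMonoid M] (f : ℕ → M) {n : ℕ}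
    (h : f n = f 0) : ∏ i ∈ range n, f (i + 1) = ∏ i ∈ range n, f i := by
  cases n with
  | zero => simp
  | succ k => rw [prod_range_succ, h, prod_range_succ']

theorem Polynomial.map_prod_map_pow_eq_of_pow_eq_one {R : Type*} [CommSemiring R]
    {σ : R →+* R} {n : ℕ} (hσ : σ ^ n = 1) (m : R[X]) :
    (∏ i ∈ Finset.range n, m.map (σ ^ i)).map σ = ∏ i ∈ Finset.range n, m.map (σ ^ i) := by
  simp_rw [Polynomial.map_prod, map_map, ← RingHom.mul_def, ← pow_succ']
  exact Finset.prod_range_shift_of_eq (fun i => m.map (σ ^ i)) (by rw [hσ, pow_zero])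

theorem FiniteField.mem_range_algebraMap_of_pow_card_eq {F K : Type*} [Field F] [Fintype F]
    [Field K] [Finite K] [Algebra F K] {c : K} (hc : c ^ Fintype.card F = c) :
    c ∈ Set.range (algebraMap F K) := by
  rw [IsGalois.mem_range_algebraMap_iff_fixed]
  intro f
  obtain ⟨n, rfl⟩ := (bijective_frobeniusAlgEquivOfAlgebraic_pow F K).2 f
  rw [AlgEquiv.coe_pow, coe_frobeniusAlgEquivOfAlgebraic]
  exact Function.iterate_fixed hc n

namespace Polynomial

section CommRing

variable (F : Type*) {K : Type*} [Field F] [Fintype F] [CommRing K] [Algebra F K]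

/-- The paper's `Nr_{K/F}(m) = ∏_{i < [K : F]} m^{(q^i)}`. -/
noncomputable def frobeniusNorm (m : K[X]) : K[X] :=
  ∏ i ∈ Finset.range (Module.finrank F K), m.map ((frobeniusAlgHom F K : K →+* K) ^ i)

theorem frobeniusAlgHom_pow_apply (n : ℕ) (c : K) :
    ((frobeniusAlgHom F K : K →+* K) ^ n) c = c ^ Fintype.card F ^ n := by
  rw [RingHom.coe_pow, RingHom.coe_coe, coe_frobeniusAlgHom, pow_iterate]

theorem Monic.frobeniusNorm {m : K[X]} (hm : m.Monic) : (frobeniusNorm F m).Monic :=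
  monic_prod_of_monic _ _ fun _ _ => hm.map _

theorem Monic.natDegree_frobeniusNorm [Nontrivial K] {m : K[X]} (hm : m.Monic) :
    (Polynomial.frobeniusNorm F m).natDegree = Module.finrank F K * m.natDegree := by
  rw [Polynomial.frobeniusNorm, natDegree_prod_of_monic _ _ fun _ _ => hm.map _]
  simp [hm.natDegree_map]

end CommRing

section Field

variable {F : Type*} {K : Type*} [Field F] [Fintype F] [Field K] [Finite K] [Algebra F K]

theorem frobeniusAlgHom_pow_finrank :
    (frobeniusAlgHom F K : K →+* K) ^ Module.finrank F K = 1 := by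
  have := Fintype.ofFinite K
  ext c
  rw [frobeniusAlgHom_pow_apply, ← Module.card_eq_pow_finrank, FiniteField.pow_card,
    RingHom.coe_one, id]

theorem map_frobeniusNorm (m : K[X]) :
    (frobeniusNorm F m).map (frobeniusAlgHom F K) = frobeniusNorm F m :=
  map_prod_map_pow_eq_of_pow_eq_one frobeniusAlgHom_pow_finrank m

theorem frobeniusNorm_mem_lifts (m : K[X]) : frobeniusNorm F m ∈ lifts (algebraMap F K) := by
  refine (lifts_iff_coeff_lifts _).mpr fun n => mem_range_algebraMap_of_pow_card_eq ?_
  conv_rhs => rw [← map_frobeniusNorm m, coeff_map]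
  rfl

theorem dvd_frobeniusNorm (m : K[X]) : m ∣ frobeniusNorm F m := by
  have h := Finset.dvd_prod_of_mem (fun i => m.map ((frobeniusAlgHom F K : K →+* K) ^ i))
    (Finset.mem_range.mpr (Module.finrank_pos (R := F) (M := K)))
  rwa [pow_zero, RingHom.one_def, map_id] at h

end Field

end Polynomial

namespace AdjoinRoot

theorem coeff_zero_eq_neg_one_pow_mul_norm_root {K : Type*} [Field K] {m : K[X]}
    (hm : m.Monic) : m.coeff 0 = (-1) ^ m.natDegree * Algebra.norm K (root m) := by
  have hm0 := hm.ne_zero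
  rw [← powerBasis_gen hm0, Algebra.PowerBasis.norm_gen_eq_coeff_zero_minpoly, powerBasis_gen,
    minpoly_root hm0, hm.leadingCoeff, inv_one, map_one, mul_one, powerBasis_dim, ← mul_assoc,
    ← pow_add, ← two_mul, pow_mul]
  simp

theorem adjoin_root_eq_top_of_adjoin_coeff_zero_eq_top {F K : Type*} [Field F] [Field K]
    [Algebra F K] [Finite K] {m : K[X]} [Fact (Irreducible m)] (hm : m.Monic)
    (hgen : Algebra.adjoin F {m.coeff 0} = ⊤) : Algebra.adjoin F {root m} = ⊤ := by
  set L := AdjoinRoot m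
  set A := Algebra.adjoin F {root m}
  have : Module.Finite K L := (powerBasis hm.ne_zero).finite
  have : Finite L := Module.finite_of_finite K
  have hroot : root m ∈ A := Algebra.subset_adjoin rfl
  -- Over finite fields `N_{L/K}(α) = α ^ ((|L| - 1) / (|K| - 1))`.
  have hcoeff : algebraMap K L (m.coeff 0) ∈ A := by
    rw [coeff_zero_eq_neg_one_pow_mul_norm_root hm, map_mul, algebraMap_norm_eq_pow, map_pow,
      map_neg, map_one]
    exact A.mul_mem (A.pow_mem (A.neg_mem A.one_mem) _) (A.pow_mem hroot _)
  have hK : ∀ k : K, algebraMap K L k ∈ A := by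
    have : Algebra.adjoin F {m.coeff 0} ≤ A.comap (IsScalarTower.toAlgHom F K L) :=
      Algebra.adjoin_le (Set.singleton_subset_iff.mpr hcoeff)
    exact fun k => this (hgen ▸ Algebra.mem_top)
  rw [eq_top_iff]
  rintro x -
  have hx : x ∈ Algebra.adjoin K {root m} := by
    rw [adjoinRoot_eq_top]
    trivial
  induction hx using Algebra.adjoin_induction with
  | mem x hx => exact (Set.mem_singleton_iff.mp hx) ▸ hroot
  | algebraMap k => exact hK k
  | add x y _ _ hx hy => exact A.add_mem hx hy
  | mul x y _ _ hx hy => exact A.mul_mem hx hy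

theorem minpoly_root_map_eq_frobeniusNorm {F K : Type*} [Field F] [Fintype F] [Field K]
    [Finite K] [Algebra F K] {m : K[X]} [Fact (Irreducible m)] (hm : m.Monic)
    (hgen : Algebra.adjoin F {m.coeff 0} = ⊤) :
    (minpoly F (root m)).map (algebraMap F K) = frobeniusNorm F m := by
  have : Module.Finite K (AdjoinRoot m) := (powerBasis hm.ne_zero).finite
  have : Module.Finite F (AdjoinRoot m) := Module.Finite.trans K (AdjoinRoot m)
  obtain ⟨g, hg⟩ := (mem_lifts _).mp (frobeniusNorm_mem_lifts (F := F) m)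
  have hg_monic : g.Monic :=
    monic_of_injective (algebraMap F K).injective (hg ▸ hm.frobeniusNorm F)
  have hg_root : aeval (root m) g = 0 := by
    obtain ⟨r, hr⟩ := dvd_frobeniusNorm (F := F) m
    rw [← aeval_map_algebraMap K, hg, hr, map_mul, aeval_eq, mk_self, zero_mul]
  have hroot_gen : IntermediateField.adjoin F {root m} = ⊤ :=
    IntermediateField.adjoin_eq_top_of_algebra F _
      (adjoin_root_eq_top_of_adjoin_coeff_zero_eq_top hm hgen)
  have hdeg : (minpoly F (root m)).natDegree = g.natDegree := by
    rw [(Field.primitive_element_iff_minpoly_natDegree_eq F _).mp hroot_gen,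
      ← Module.finrank_mul_finrank F K (AdjoinRoot m),
      ← natDegree_map_eq_of_injective (algebraMap F K).injective, hg,
      hm.natDegree_frobeniusNorm F, (powerBasis hm.ne_zero).finrank, powerBasis_dim]
  rw [← hg, eq_of_monic_of_dvd_of_natDegree_le (minpoly.monic (IsIntegral.of_finite F _))
    hg_monic (minpoly.dvd F _ hg_root) hdeg.ge]

end AdjoinRoot

theorem norm_of_generator_polynomial_irreducible_general
    {F : Type} [Field F] [Fintype F] {q d : ℕ} (hq : Fintype.card F = q)
    (p : Polynomial F) (hpirr : Irreducible p)
    (hpd : p.natDegree = d)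
    (m : Polynomial (AdjoinRoot p)) (hm : m.Monic) (hmirr : Irreducible m)
    (hgen : Algebra.adjoin F {m.coeff 0} = (⊤ : Subalgebra F (AdjoinRoot p))) :
    ∃ g : Polynomial F,
      g.map (algebraMap F (AdjoinRoot p)) =
        ∏ i ∈ Finset.range d, ∑ j ∈ Finset.range (m.natDegree + 1),
          Polynomial.C ((m.coeff j) ^ q ^ i) * Polynomial.X ^ j ∧
      Irreducible g := by
  subst hq hpd
  have : Fact (Irreducible p) := ⟨hpirr⟩
  have : Fact (Irreducible m) := ⟨hmirr⟩
  have : Module.Finite F (AdjoinRoot p) := (AdjoinRoot.powerBasis hpirr.ne_zero).finite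
  have : Finite (AdjoinRoot p) := Module.finite_of_finite F
  have hint : IsIntegral F (AdjoinRoot.root m) :=
    isIntegral_trans _ (AdjoinRoot.isIntegral_root hmirr.ne_zero)
  refine ⟨minpoly F (AdjoinRoot.root m), ?_, minpoly.irreducible hint⟩
  rw [AdjoinRoot.minpoly_root_map_eq_frobeniusNorm hm hgen, frobeniusNorm,
    (AdjoinRoot.powerBasis hpirr.ne_zero).finrank, AdjoinRoot.powerBasis_dim]
  refine Finset.prod_congr rfl fun i _ => ?_
  conv_lhs => rw [m.as_sum_range_C_mul_X_pow]
  simp [Polynomial.map_sum, frobeniusAlgHom_pow_apply]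

/-- **Irreducibility of the norm of a polynomial over the residue field.**
Let `F_p = F_q[T]/(p)` (realized as `AdjoinRoot p`) for a monic irreducible
`p ∈ F_q[T]` of degree `d`, and let `m(x) ∈ F_p[x]` be monic irreducible with
constant term `m(0)` generating `F_p` over `F_q`.  Then the norm
`Nr_{F_p/F_q}(m(x)) = ∏_{i=0}^{d−1} m^{(q^i)}(x)` (Frobenius applied to the
coefficients) lies in `F_q[x]` and is irreducible there. -/
theorem norm_of_generator_polynomial_irreducible
    {F : Type} [Field F] [Fintype F] {q d : ℕ} (hq : Fintype.card F = q)
    (p : Polynomial F) (hpmonic : p.Monic) (hpirr : Irreducible p)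
    (hpd : p.natDegree = d) (hd : 0 < d)
    (m : Polynomial (AdjoinRoot p)) (hm : m.Monic) (hmirr : Irreducible m)
    (hgen : Algebra.adjoin F {m.coeff 0} = (⊤ : Subalgebra F (AdjoinRoot p))) :
    ∃ g : Polynomial F,
      g.map (algebraMap F (AdjoinRoot p)) =
        ∏ i ∈ Finset.range d, ∑ j ∈ Finset.range (m.natDegree + 1),
          Polynomial.C ((m.coeff j) ^ q ^ i) * Polynomial.X ^ j ∧
      Irreducible g :=
  norm_of_generator_polynomial_irreducible_general hq p hpirr hpd m hm hmirr hgen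
end

section
/- Let p ∈ F_q[T] be a prime of degree d ≥ 1, r, ℓ, g positive integers with g = 1 and ℓ prime, and suppose M ⊆ Mat_{rℓ}(F_p) is an F_q-subspace of dimension rdℓ containing 1, whose centralizer C(M) in Mat_{rℓ}(F_p) is a field containing F_{q^{rd}}, and such that M is not commutative (as a subset of Mat_{rℓ}(F_p) under matrix multiplication). Then C(M) ≅ F_{q^{rd}}. -/
open Matrix


/-- **The centralizer of the semifield code (Lemma 4.10 of the paper).**
Let `F_p = F_q[T]/(p) ≅ F_{q^d}` for a prime `p` of degree `d ≥ 1`, let `ℓ` be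
prime (and `g = 1`), and let `M ⊆ Mat_{rℓ}(F_p)` be an `F_q`-subspace of
dimension `r·d·ℓ` containing `1` which is not commutative, such that the
centralizer `C(M) = {f : f·m = m·f for all m ∈ M}` is a field (a commutative
subring all of whose nonzero elements are invertible) containing a copy of
`F_{q^{rd}}`.  Then `C(M) ≅ F_{q^{rd}}`, i.e. `|C(M)| = q^{rd}`. -/
theorem centralizer_of_semifield_code
    {F Fp : Type} [Field F] [Fintype F] {q r d ℓ : ℕ}
    (hq : Fintype.card F = q) (hr : 0 < r) (hd : 0 < d) (hℓ : ℓ.Prime)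
    [Field Fp] [Fintype Fp] [Algebra F Fp] (hFp : Fintype.card Fp = q ^ d)
    (M : Submodule F (Matrix (Fin (r * ℓ)) (Fin (r * ℓ)) Fp))
    (hMdim : Module.finrank F M = r * d * ℓ)
    (hM1 : (1 : Matrix (Fin (r * ℓ)) (Fin (r * ℓ)) Fp) ∈ M)
    (hMnoncomm : ∃ x ∈ M, ∃ y ∈ M, x * y ≠ y * x)
    (hCcomm : ∀ f ∈ Subring.centralizer (M : Set (Matrix (Fin (r * ℓ)) (Fin (r * ℓ)) Fp)),
      ∀ f' ∈ Subring.centralizer (M : Set (Matrix (Fin (r * ℓ)) (Fin (r * ℓ)) Fp)),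
        f * f' = f' * f)
    (hCfield : ∀ f ∈ Subring.centralizer (M : Set (Matrix (Fin (r * ℓ)) (Fin (r * ℓ)) Fp)),
      f ≠ 0 → IsUnit f)
    (hCbig : ∃ S : Subring (Matrix (Fin (r * ℓ)) (Fin (r * ℓ)) Fp),
      (S : Set (Matrix (Fin (r * ℓ)) (Fin (r * ℓ)) Fp)) ⊆
        Subring.centralizer (M : Set (Matrix (Fin (r * ℓ)) (Fin (r * ℓ)) Fp)) ∧
      Nat.card S = q ^ (r * d)) :
    Nat.card
      (Subring.centralizer (M : Set (Matrix (Fin (r * ℓ)) (Fin (r * ℓ)) Fp))) =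
      q ^ (r * d) := by
  classical
  obtain ⟨S, hSsub, hScard⟩ := hCbig
  set Mat := Matrix (Fin (r * ℓ)) (Fin (r * ℓ)) Fp
  set C : Subring Mat := Subring.centralizer (M : Set Mat) with hCdef
  have hn : 0 < r * ℓ := Nat.mul_pos hr hℓ.pos
  haveI : NeZero (r * ℓ) := ⟨hn.ne'⟩
  haveI : Nontrivial Mat := by
    infer_instance
  -- C is a finite field
  letI : CommRing ↥C :=
    { (inferInstance : Ring ↥C) with
      mul_comm := fun a b => Subtype.ext (hCcomm a.1 a.2 b.1 b.2) }
  have hnzd : ∀ a b : Mat, a ∈ C → b ∈ C → a * b = 0 → a = 0 ∨ b = 0 := by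
    intro a b ha hb hab
    by_cases h0 : a = 0
    · exact Or.inl h0
    · obtain ⟨u, hu⟩ := hCfield a ha h0
      right
      have : (↑u⁻¹ : Mat) * (a * b) = 0 := by rw [hab, mul_zero]
      rwa [← mul_assoc, ← hu, Units.inv_mul, one_mul] at this
  haveI : Nontrivial ↥C := ⟨⟨0, 1, by
    intro h
    exact zero_ne_one (congrArg Subtype.val h)⟩⟩
  haveI : NoZeroDivisors ↥C := ⟨by
    rintro ⟨a, ha⟩ ⟨b, hb⟩ hab
    rcases hnzd a b ha hb (congrArg Subtype.val hab) with h | h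
    · exact Or.inl (Subtype.ext h)
    · exact Or.inr (Subtype.ext h)⟩
  haveI : IsDomain ↥C := NoZeroDivisors.to_isDomain _
  letI : Field ↥C := (Finite.isField_of_domain ↥C).toField
  -- S is a finite field
  letI : CommRing ↥S :=
    { (inferInstance : Ring ↥S) with
      mul_comm := fun a b =>
        Subtype.ext (hCcomm a.1 (hSsub a.2) b.1 (hSsub b.2)) }
  haveI : Nontrivial ↥S := ⟨⟨0, 1, by
    intro h
    exact zero_ne_one (congrArg Subtype.val h)⟩⟩
  haveI : NoZeroDivisors ↥S := ⟨by
    rintro ⟨a, ha⟩ ⟨b, hb⟩ hab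
    rcases hnzd a b (hSsub ha) (hSsub hb) (congrArg Subtype.val hab) with h | h
    · exact Or.inl (Subtype.ext h)
    · exact Or.inr (Subtype.ext h)⟩
  haveI : IsDomain ↥S := NoZeroDivisors.to_isDomain _
  letI : Field ↥S := (Finite.isField_of_domain ↥S).toField
  -- C as an S-vector space
  letI : SMul ↥S ↥C := ⟨fun s c => ⟨s.1 * c.1, C.mul_mem (hSsub s.2) c.2⟩⟩
  have smul_def : ∀ (s : ↥S) (c : ↥C), (s • c).1 = s.1 * c.1 := fun _ _ => rfl
  letI : Module ↥S ↥C :=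
    { one_smul := fun c => Subtype.ext (one_mul c.1)
      mul_smul := fun s t c => Subtype.ext (mul_assoc s.1 t.1 c.1)
      smul_add := fun s c c' => Subtype.ext (mul_add s.1 c.1 c'.1)
      smul_zero := fun s => Subtype.ext (mul_zero s.1)
      add_smul := fun s t c => Subtype.ext (add_mul s.1 t.1 c.1)
      zero_smul := fun c => Subtype.ext (zero_mul c.1) }
  -- V as a C-vector space
  letI : SMul ↥C (Fin (r * ℓ) → Fp) := ⟨fun c v => c.1 *ᵥ v⟩
  have smul_def' : ∀ (c : ↥C) (v : Fin (r * ℓ) → Fp), c • v = c.1 *ᵥ v :=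
    fun _ _ => rfl
  letI : Module ↥C (Fin (r * ℓ) → Fp) :=
    { one_smul := fun v => Matrix.one_mulVec v
      mul_smul := fun c c' v => (Matrix.mulVec_mulVec v c.1 c'.1).symm
      smul_add := fun c v w => Matrix.mulVec_add c.1 v w
      smul_zero := fun c => Matrix.mulVec_zero c.1
      add_smul := fun c c' v => Matrix.add_mulVec c.1 c'.1 v
      zero_smul := fun v => Matrix.zero_mulVec v }
  letI : Fintype ↥C := Fintype.ofFinite _
  letI : Fintype ↥S := Fintype.ofFinite _
  have hq2 : 2 ≤ q := hq ▸ Fintype.one_lt_card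
  set j := Module.finrank ↥S ↥C with hj
  set m := Module.finrank ↥C (Fin (r * ℓ) → Fp) with hm
  have hScard' : Fintype.card ↥S = q ^ (r * d) := by
    rw [← Nat.card_eq_fintype_card]; exact hScard
  have hCcard : Fintype.card ↥C = q ^ (r * d * j) := by
    rw [Module.card_eq_pow_finrank (K := ↥S) (V := ↥C), hScard', ← pow_mul]
  have hVcard : Fintype.card (Fin (r * ℓ) → Fp) = q ^ (d * (r * ℓ)) := by
    rw [Fintype.card_pi, Finset.prod_const, hFp, Finset.card_univ,
      Fintype.card_fin, ← pow_mul]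
  have hVcard' : Fintype.card (Fin (r * ℓ) → Fp) = q ^ (r * d * (j * m)) := by
    rw [Module.card_eq_pow_finrank (K := ↥C) (V := Fin (r * ℓ) → Fp), hCcard, ← pow_mul,
      mul_assoc]
  have hexp : d * (r * ℓ) = r * d * (j * m) :=
    Nat.pow_right_injective hq2 (hVcard.symm.trans hVcard')
  have hℓjm : ℓ = j * m := by
    have h1 : r * d * ℓ = r * d * (j * m) := by
      rw [← hexp]; ring
    exact Nat.eq_of_mul_eq_mul_left (Nat.mul_pos hr hd) h1
  have hjdvd : j ∣ ℓ := ⟨m, hℓjm⟩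
  rcases (Nat.Prime.eq_one_or_self_of_dvd hℓ j hjdvd) with hj1 | hjℓ
  · rw [Nat.card_eq_fintype_card, hCcard, hj1, mul_one]
  · -- j = ℓ forces m = 1, giving M ⊆ C, contradicting non-commutativity
    exfalso
    have hm1 : m = 1 := by
      have h2 : ℓ = ℓ * m := by conv_lhs => rw [hℓjm, hjℓ]
      exact (Nat.eq_of_mul_eq_mul_left hℓ.pos ((mul_one ℓ).trans h2)).symm
    have h1 : Module.finrank ↥C (Fin (r * ℓ) → Fp) = 1 := hm1 ▸ hm.symm
    haveI : Module.Free ↥C (Fin (r * ℓ) → Fp) := Module.Free.of_divisionRing _ _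
    obtain ⟨v, hv0, hvspan⟩ := (finrank_eq_one_iff' (K := ↥C)).mp h1
    have key : ∀ z ∈ M, z ∈ C := by
      intro z hz
      obtain ⟨c, hc⟩ := hvspan (z *ᵥ v)
      have hzw : ∀ w : Fin (r * ℓ) → Fp, z *ᵥ w = c.1 *ᵥ w := by
        intro w
        obtain ⟨a, ha⟩ := hvspan w
        rw [← ha, smul_def', Matrix.mulVec_mulVec, Matrix.mulVec_mulVec]
        have hza : z * a.1 = a.1 * z :=
          Subring.mem_centralizer_iff.mp a.2 z hz
        have hca : c.1 * a.1 = a.1 * c.1 := hCcomm c.1 c.2 a.1 a.2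
        rw [hza, hca, ← Matrix.mulVec_mulVec, ← Matrix.mulVec_mulVec,
          ← smul_def' c v, hc]
      have : z = c.1 := by
        ext i k
        have := congrFun (hzw (Pi.single k 1)) i
        simpa using this
      rw [this]; exact c.2
    obtain ⟨x, hx, y, hy, hxy⟩ := hMnoncomm
    exact hxy (hCcomm x (key x hx) y (key y hy))
end
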